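/- Let M ∈ ℝ^{n×c} and suppose M = U₁ Σ V₁ᵀ is a compact singular value decomposition: U₁ ∈ ℝ^{n×s} and V₁ ∈ ℝ^{c×s} have orthonormal columns (U₁ᵀU₁ = I_s and V₁ᵀV₁ = I_s) and Σ ∈ ℝ^{s×s} is diagonal with strictly positive diagonal entries. Then U₁V₁ᵀ is a subgradient of the nuclear norm at M; that is, for every matrix D ∈ ℝ^{n×c}, ‖D‖_* ≥ ‖M‖_* + trace((U₁V₁ᵀ)ᵀ (D − M)). -/

import Mathlib

/-!
A matrix `G` with `GᵀG ≤ 1` satisfies `trace (Gᵀ D) ≤ ‖D‖_*` for every `D`: in an orthonormal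
eigenbasis `W` of `DᵀD` with eigenvalues `λᵢ`, Cauchy–Schwarz column by column gives
`trace (Gᵀ D) = ∑ᵢ ⟪(GW)ᵢ, (DW)ᵢ⟫ ≤ ∑ᵢ ‖(GW)ᵢ‖ √λᵢ ≤ ∑ᵢ √λᵢ`.
For `G = U₁V₁ᵀ` we have `GᵀG = V₁V₁ᵀ`, an orthogonal projection, and `GᵀM = V₁ΣV₁ᵀ` is the
positive square root of `MᵀM`, so `trace (Gᵀ M) = ‖M‖_*`; subtracting the two gives the claim.
-/

open Matrix

/-- The nuclear norm of a real matrix `M`: the trace of the positive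
semidefinite square root of `Mᵀ * M`. -/
noncomputable def nuclearNorm {m n : Type*} [Fintype m] [Fintype n] [DecidableEq n]
    (M : Matrix m n ℝ) : ℝ :=
  ((Matrix.posSemidef_conjTranspose_mul_self M).1.eigenvectorUnitary.1 *
    diagonal ((RCLike.ofReal ∘ (√·) ∘ (Matrix.posSemidef_conjTranspose_mul_self M).1.eigenvalues : n → ℝ)) *
    (star (Matrix.posSemidef_conjTranspose_mul_self M).1.eigenvectorUnitary : Matrix n n ℝ)).trace

open scoped MatrixOrder

section

variable {m n : Type*} [Fintype m]

lemma Matrix.transpose_mul_self_apply_self (X : Matrix m n ℝ) (i : n) :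
    (Xᵀ * X) i i = ∑ k, X k i ^ 2 := by
  simp [mul_apply, sq]

lemma Matrix.transpose_mul_apply_self_le (X Y : Matrix m n ℝ) (i : n) :
    (Xᵀ * Y) i i ≤ √((Xᵀ * X) i i) * √((Yᵀ * Y) i i) := by
  rw [transpose_mul_self_apply_self, transpose_mul_self_apply_self]
  simpa only [mul_apply, transpose_apply] using
    Real.sum_mul_le_sqrt_mul_sqrt Finset.univ (fun k => X k i) (fun k => Y k i)

variable [Fintype n] [DecidableEq n]

lemma Matrix.posSemidef_one_sub_mul_transpose [DecidableEq m] {V : Matrix n m ℝ}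
    (hV : Vᵀ * V = 1) :
    (1 - V * Vᵀ).PosSemidef := by
  have hidem : (1 - V * Vᵀ)ᴴ * (1 - V * Vᵀ) = 1 - V * Vᵀ := by
    have hVV : V * Vᵀ * (V * Vᵀ) = V * Vᵀ := by
      rw [Matrix.mul_assoc, ← Matrix.mul_assoc Vᵀ, hV, Matrix.one_mul]
    rw [conjTranspose_eq_transpose_of_trivial, transpose_sub, transpose_one, transpose_mul,
      transpose_transpose, Matrix.sub_mul, Matrix.mul_sub, Matrix.mul_sub, hVV]
    simp only [Matrix.one_mul, Matrix.mul_one, sub_self, sub_zero]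
  exact hidem ▸ posSemidef_conjTranspose_mul_self (1 - V * Vᵀ)

lemma Matrix.IsHermitian.eigenvectorUnitary_transpose_mul_mul_eq_diagonal {A : Matrix n n ℝ}
    (hA : A.IsHermitian) :
    (hA.eigenvectorUnitary : Matrix n n ℝ)ᵀ * A * hA.eigenvectorUnitary =
      diagonal hA.eigenvalues := by
  have h := hA.conjStarAlgAut_star_eigenvectorUnitary
  rw [Unitary.conjStarAlgAut_apply] at h
  simpa [Unitary.coe_star, Function.comp_def, star_eq_conjTranspose] using h

lemma nuclearNorm_eq_sum_sqrt_eigenvalues (D : Matrix m n ℝ) :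
    nuclearNorm D = ∑ i, √((posSemidef_conjTranspose_mul_self D).1.eigenvalues i) := by
  rw [nuclearNorm, trace_mul_cycle, UnitaryGroup.star_mul_self, Matrix.one_mul, trace_diagonal]
  rfl

lemma nuclearNorm_eq_trace_sqrt (M : Matrix m n ℝ) :
    nuclearNorm M = (CFC.sqrt (Mᴴ * M)).trace := by
  have hM := posSemidef_conjTranspose_mul_self M
  rw [CFC.sqrt_eq_real_sqrt _ hM.nonneg, cfcₙ_eq_cfc, hM.1.cfc_eq, IsHermitian.cfc,
    Unitary.conjStarAlgAut_apply]
  rfl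

lemma nuclearNorm_eq_trace_of_mul_self {M : Matrix m n ℝ} {N : Matrix n n ℝ}
    (hN : N.PosSemidef) (h : N * N = Mᴴ * M) : nuclearNorm M = N.trace := by
  rw [nuclearNorm_eq_trace_sqrt, ← h, CFC.sqrt_mul_self N hN.nonneg]

lemma Matrix.trace_transpose_mul_le_sum_sqrt {G D : Matrix m n ℝ} {W : Matrix n n ℝ} {d : n → ℝ}
    (hW : W ∈ unitary (Matrix n n ℝ)) (hG : (1 - Gᵀ * G).PosSemidef)
    (hD : (D * W)ᵀ * (D * W) = diagonal d) :
    (Gᵀ * D).trace ≤ ∑ i, √(d i) := by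
  have hWW : Wᵀ * W = 1 := hW.1
  have hWW' : W * Wᵀ = 1 := hW.2
  have hcol (i : n) : ((G * W)ᵀ * (G * W)) i i ≤ 1 := by
    have h := (hG.conjTranspose_mul_mul_same W).diag_nonneg (i := i)
    rw [conjTranspose_eq_transpose_of_trivial, Matrix.mul_sub, Matrix.sub_mul, Matrix.mul_one,
      hWW, Matrix.sub_apply, one_apply_eq, sub_nonneg] at h
    rwa [transpose_mul, Matrix.mul_assoc, ← Matrix.mul_assoc Gᵀ, ← Matrix.mul_assoc]
  calc (Gᵀ * D).trace = (Gᵀ * D * (W * Wᵀ)).trace := by rw [hWW', Matrix.mul_one]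
    _ = ((G * W)ᵀ * (D * W)).trace := by
        rw [← Matrix.mul_assoc, trace_mul_comm, transpose_mul]
        simp only [Matrix.mul_assoc]
    _ ≤ ∑ i, √(((G * W)ᵀ * (G * W)) i i) * √(((D * W)ᵀ * (D * W)) i i) :=
        Finset.sum_le_sum fun i _ => transpose_mul_apply_self_le _ _ i
    _ ≤ ∑ i, √(d i) := by
        gcongr with i
        rw [hD, diagonal_apply_eq]
        exact mul_le_of_le_one_left (Real.sqrt_nonneg _) (Real.sqrt_le_one.2 (hcol i))

theorem trace_transpose_mul_le_nuclearNorm {G : Matrix m n ℝ} (hG : (1 - Gᵀ * G).PosSemidef)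
    (D : Matrix m n ℝ) : (Gᵀ * D).trace ≤ nuclearNorm D := by
  have hH := (posSemidef_conjTranspose_mul_self D).1
  rw [nuclearNorm_eq_sum_sqrt_eigenvalues]
  refine trace_transpose_mul_le_sum_sqrt hH.eigenvectorUnitary.2 hG ?_
  rw [transpose_mul, ← hH.eigenvectorUnitary_transpose_mul_mul_eq_diagonal]
  simp only [Matrix.mul_assoc, conjTranspose_eq_transpose_of_trivial]

end

theorem subgradient_of_nuclearNorm_of_compact_svd (n c s : ℕ)
    (M : Matrix (Fin n) (Fin c) ℝ)
    (U₁ : Matrix (Fin n) (Fin s) ℝ) (V₁ : Matrix (Fin c) (Fin s) ℝ)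
    (Sig : Matrix (Fin s) (Fin s) ℝ)
    (hU : U₁ᵀ * U₁ = 1) (hV : V₁ᵀ * V₁ = 1)
    (hSigDiag : ∀ i j : Fin s, i ≠ j → Sig i j = 0)
    (hSigPos : ∀ i : Fin s, 0 < Sig i i)
    (hM : M = U₁ * Sig * V₁ᵀ) :
    ∀ D : Matrix (Fin n) (Fin c) ℝ,
      nuclearNorm M + ((U₁ * V₁ᵀ)ᵀ * (D - M)).trace ≤ nuclearNorm D := by
  intro D
  have hSig : Sig = diagonal Sig.diag := ((isDiag_iff_diagonal_diag Sig).mp hSigDiag).symm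
  have hSigPSD : Sig.PosSemidef := hSig ▸ posSemidef_diagonal_iff.mpr fun i => (hSigPos i).le
  have hSigT : Sigᵀ = Sig := by rw [hSig, diagonal_transpose]
  have hGM : (U₁ * V₁ᵀ)ᵀ * M = V₁ * Sig * V₁ᵀ := by
    rw [hM, transpose_mul, transpose_transpose, Matrix.mul_assoc, ← Matrix.mul_assoc U₁ᵀ,
      ← Matrix.mul_assoc U₁ᵀ, hU, Matrix.one_mul, Matrix.mul_assoc]
  have hGG : (U₁ * V₁ᵀ)ᵀ * (U₁ * V₁ᵀ) = V₁ * V₁ᵀ := by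
    rw [transpose_mul, transpose_transpose, Matrix.mul_assoc, ← Matrix.mul_assoc U₁ᵀ, hU,
      Matrix.one_mul]
  have hsq : V₁ * Sig * V₁ᵀ * (V₁ * Sig * V₁ᵀ) = Mᴴ * M := by
    rw [hM, conjTranspose_eq_transpose_of_trivial, transpose_mul, transpose_mul,
      transpose_transpose, hSigT]
    simp only [Matrix.mul_assoc]
    rw [← Matrix.mul_assoc V₁ᵀ, ← Matrix.mul_assoc U₁ᵀ, hU, hV]
  have hnucM : nuclearNorm M = (V₁ * Sig * V₁ᵀ).trace := by
    refine nuclearNorm_eq_trace_of_mul_self ?_ hsq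
    simpa only [conjTranspose_eq_transpose_of_trivial] using hSigPSD.mul_mul_conjTranspose_same V₁
  have hle := trace_transpose_mul_le_nuclearNorm
    (hGG ▸ posSemidef_one_sub_mul_transpose hV : (1 - (U₁ * V₁ᵀ)ᵀ * (U₁ * V₁ᵀ)).PosSemidef) D
  rw [Matrix.mul_sub, trace_sub, hGM, ← hnucM]
  linarith
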